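/- arXiv:2003.06511 — 3 statements merged into one kernel-verified Lean document; each statement's English description precedes it below -/
import Mathlib

section
/- Let 𝒳 be a nonempty finite set, let P1, P2 be full-support probability distributions on 𝒳 and let β > 0. Then the function φ(t) = GJS(t·P1 + (1−t)·P2, P2, β) satisfies φ(0) = 0 and has (right) derivative 0 at t = 0, i.e., lim_{t→0⁺} φ(t)/t = 0. -/
namespace StmtNS

variable {X : Type*} [Fintype X]

/-- `P` is a probability distribution on the finite set `X`. -/
def IsProbDist (P : X → ℝ) : Prop := (∀ x, 0 ≤ P x) ∧ (∑ x, P x) = 1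

/-- Kullback–Leibler divergence `D(P‖Q) = ∑_{x : P(x) > 0} P(x) log (P(x)/Q(x))`. -/
noncomputable def KL (P Q : X → ℝ) : ℝ :=
  ∑ x, if 0 < P x then P x * Real.log (P x / Q x) else 0

/-- Generalized Jensen–Shannon divergence. -/
noncomputable def GJS (Q Qt : X → ℝ) (a : ℝ) : ℝ :=
  a * KL Q (fun x => (a * Q x + Qt x) / (a + 1)) +
    KL Qt (fun x => (a * Q x + Qt x) / (a + 1))

/-! Near `t = 0` the mixture `t • P1 + (1 - t) • P2` has full support, so `φ(t)` is a finite
sum of smooth terms `gjsSummand β b q` with `b = P2 x` and `q = t P1 x + (1 - t) P2 x`. Each term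
vanishes at `q = b` together with its `q`-derivative `β log (q / m) + β (1 - q m' / m) - b m' / m`,
because there the mean `m = (β q + b) / (β + 1)` equals `b` and `m' = β / (β + 1)`. Hence
`φ(0) = φ'(0) = 0`, and `φ(t) / t → 0`. -/

open Filter Topology

theorem KL_self (P : X → ℝ) : KL P P = 0 :=
  Finset.sum_eq_zero fun x _ => by
    split_ifs with h
    · simp [div_self h.ne']
    · rfl

theorem GJS_self {β : ℝ} (hβ : β + 1 ≠ 0) (Q : X → ℝ) : GJS Q Q β = 0 := by
  have hmean : (fun x => (β * Q x + Q x) / (β + 1)) = Q := by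
    funext x; field_simp
  simp only [GJS, hmean, KL_self, mul_zero, add_zero]

/-- The summand of `GJS Q Qt β` at a point where `Q = q > 0` and `Qt = b > 0`. -/
noncomputable def gjsSummand (β b q : ℝ) : ℝ :=
  β * (q * Real.log (q / ((β * q + b) / (β + 1)))) +
    b * Real.log (b / ((β * q + b) / (β + 1)))

theorem GJS_eq_sum_gjsSummand {Q Qt : X → ℝ} (hQ : ∀ x, 0 < Q x) (hQt : ∀ x, 0 < Qt x)
    (β : ℝ) : GJS Q Qt β = ∑ x, gjsSummand β (Qt x) (Q x) := by
  simp only [GJS, KL, if_pos (hQ _), if_pos (hQt _), Finset.mul_sum, ← Finset.sum_add_distrib,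
    gjsSummand]

theorem gjsSummand_self {β : ℝ} (hβ : β + 1 ≠ 0) (b : ℝ) : gjsSummand β b b = 0 := by
  have hmean : (β * b + b) / (β + 1) = b := by field_simp
  simp [gjsSummand, hmean]

theorem hasDerivAt_gjsSummand_self {β b : ℝ} (hβ : β + 1 ≠ 0) (hb : b ≠ 0) :
    HasDerivAt (gjsSummand β b) 0 b := by
  have hmean : (β * b + b) / (β + 1) = b := by field_simp
  have hm : HasDerivAt (fun q : ℝ => (β * q + b) / (β + 1)) (β / (β + 1)) b := by
    simpa using (((hasDerivAt_id b).const_mul β).add_const b).div_const (β + 1)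
  have hm_ne : (β * b + b) / (β + 1) ≠ 0 := by rwa [hmean]
  have hlog_q := ((hasDerivAt_id b).div hm hm_ne).log (by simp [hmean, hb])
  have hlog_b := ((hasDerivAt_const b b).div hm hm_ne).log (by simp [hmean, hb])
  refine (((hasDerivAt_id b).mul hlog_q).const_mul β |>.add (hlog_b.const_mul b)).congr_deriv ?_
  simp only [Pi.div_apply, id, hmean, div_self hb, Real.log_one]
  field_simp
  ring

theorem hasDerivAt_gjsSummand_mix {β a b : ℝ} (hβ : β + 1 ≠ 0) (hb : b ≠ 0) :
    HasDerivAt (fun t => gjsSummand β b (t * a + (1 - t) * b)) 0 0 := by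
  have hmix : HasDerivAt (fun t : ℝ => t * a + (1 - t) * b) (a - b) 0 := by
    have h := ((hasDerivAt_id (0 : ℝ)).mul_const a).fun_add
      (((hasDerivAt_id (0 : ℝ)).const_sub 1).mul_const b)
    exact h.congr_deriv (by simp; ring)
  have hsummand : HasDerivAt (gjsSummand β b) 0 (0 * a + (1 - 0) * b) := by
    simpa using hasDerivAt_gjsSummand_self hβ hb
  have h := hsummand.comp 0 hmix
  rw [zero_mul] at h
  exact h

theorem tendsto_div_nhdsGT_zero_of_hasDerivAt {f : ℝ → ℝ} (hf0 : f 0 = 0)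
    (hf : HasDerivAt f 0 0) : Tendsto (fun t => f t / t) (𝓝[>] 0) (𝓝 0) := by
  simpa [hf0, div_eq_inv_mul] using hf.tendsto_slope_zero_right

theorem eventually_forall_mix_pos {P2 : X → ℝ} (hP2 : ∀ x, 0 < P2 x) (P1 : X → ℝ) :
    ∀ᶠ t in 𝓝 (0 : ℝ), ∀ x, 0 < t * P1 x + (1 - t) * P2 x := by
  refine eventually_all.2 fun x => ?_
  have hcont : Continuous fun t : ℝ => t * P1 x + (1 - t) * P2 x := by fun_prop
  simpa using hcont.continuousAt.eventually (lt_mem_nhds (by simpa using hP2 x))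

theorem gjs_mix_zero_and_right_deriv_zero_general
    (P1 P2 : X → ℝ) (hP2pos : ∀ x, 0 < P2 x)
    {β : ℝ} (hβ : 0 < β) :
    GJS (fun x => (0 : ℝ) * P1 x + (1 - 0) * P2 x) P2 β = 0 ∧
    Filter.Tendsto
      (fun t : ℝ => GJS (fun x => t * P1 x + (1 - t) * P2 x) P2 β / t)
      (nhdsWithin 0 (Set.Ioi 0)) (nhds 0) := by
  have hβ1 : β + 1 ≠ 0 := by positivity
  set F : ℝ → ℝ := fun t => ∑ x, gjsSummand β (P2 x) (t * P1 x + (1 - t) * P2 x)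
  have hmix0 : (fun x => (0 : ℝ) * P1 x + (1 - 0) * P2 x) = P2 := by funext x; ring
  have hF0 : F 0 = 0 := Finset.sum_eq_zero fun x _ => by simpa using gjsSummand_self hβ1 (P2 x)
  have hF' : HasDerivAt F 0 0 := by
    simpa using HasDerivAt.fun_sum (u := Finset.univ) fun x _ =>
      hasDerivAt_gjsSummand_mix (a := P1 x) hβ1 (hP2pos x).ne'
  refine ⟨by rw [hmix0]; exact GJS_self hβ1 P2,
    (tendsto_div_nhdsGT_zero_of_hasDerivAt hF0 hF').congr' ?_⟩
  filter_upwards [nhdsWithin_le_nhds (eventually_forall_mix_pos hP2pos P1)] with t ht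
  rw [GJS_eq_sum_gjsSummand ht hP2pos]

/-- `φ(t) = GJS(t·P1 + (1−t)·P2, P2, β)` satisfies `φ(0) = 0` and
`lim_{t→0⁺} φ(t)/t = 0`. -/
theorem gjs_mix_zero_and_right_deriv_zero [Nonempty X]
    (P1 P2 : X → ℝ) (hP1 : IsProbDist P1) (hP2 : IsProbDist P2)
    (hP1pos : ∀ x, 0 < P1 x) (hP2pos : ∀ x, 0 < P2 x)
    {β : ℝ} (hβ : 0 < β) :
    GJS (fun x => (0 : ℝ) * P1 x + (1 - 0) * P2 x) P2 β = 0 ∧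
    Filter.Tendsto
      (fun t : ℝ => GJS (fun x => t * P1 x + (1 - t) * P2 x) P2 β / t)
      (nhdsWithin 0 (Set.Ioi 0)) (nhds 0) :=
  gjs_mix_zero_and_right_deriv_zero_general P1 P2 hP2pos hβ

end StmtNS
end

section
/- Let 𝒳 be a nonempty finite set and let P1 ≠ P2 be full-support probability distributions on 𝒳. Then the function ψ(β) = D(P2 ‖ β·P1 + (1−β)·P2) is strictly increasing on the interval [0,1). -/
namespace StmtNS

variable {X : Type*} [Fintype X]

/-!
Since `P2` has full support, `Q ↦ D(P2‖Q)` is strictly convex on positive vectors (termwise, by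
strict concavity of `log`), and `β ↦ β • P1 + (1 - β) • P2` is an injective affine map, so `ψ` is
strictly convex on `[0, 1)`. By Gibbs' inequality `ψ ≥ 0 = ψ 0`, and a strictly convex function is
strictly increasing to the right of a minimiser.
-/

open Real Set Function

theorem _root_.StrictConvexOn.comp_affineMap_of_injective {𝕜 E F β : Type*} [Ring 𝕜]
    [PartialOrder 𝕜] [AddCommGroup E] [Module 𝕜 E] [AddCommGroup F] [Module 𝕜 F]
    [AddCommMonoid β] [PartialOrder β] [SMul 𝕜 β] {f : F → β} {s : Set F}
    (hf : StrictConvexOn 𝕜 s f) (g : E →ᵃ[𝕜] F) (hg : Injective g) :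
    StrictConvexOn 𝕜 (g ⁻¹' s) (f ∘ g) :=
  ⟨hf.1.affine_preimage g, fun x hx y hy hxy a b ha hb hab => by
    simpa only [comp_apply, Convex.combo_affine_apply hab] using
      hf.2 hx hy (hg.ne hxy) ha hb hab⟩

theorem _root_.StrictConvexOn.strictMonoOn_of_isMinOn {𝕜 : Type*} [Field 𝕜] [LinearOrder 𝕜]
    [IsStrictOrderedRing 𝕜] {s : Set 𝕜} {f : 𝕜 → 𝕜} {a : 𝕜}
    (hf : StrictConvexOn 𝕜 s f) (hmin : IsMinOn f s a) (ha : a ∈ s) :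
    StrictMonoOn f (s ∩ Ici a) := by
  have hlt : ∀ v ∈ s, a < v → f a < f v := fun v hv hav => by
    refine lt_of_le_of_ne (hmin hv) fun heq => hav.ne ?_
    exact hf.eq_of_isMinOn hmin (fun z hz => heq ▸ hmin hz) ha hv
  intro u hu v hv huv
  rcases hu.2.eq_or_lt with rfl | hau
  · exact hlt v hv.1 huv
  · exact hf.convexOn.strictMonoOn ha hau (hlt u hu.1 hau) ⟨hu.1, le_rfl⟩ ⟨hv.1, huv.le⟩ huv

theorem strictConvexOn_sum_apply {ι E : Type*} [Fintype ι] [AddCommGroup E] [Module ℝ E]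
    {s : Set E} {f : ι → E → ℝ} (hf : ∀ i, StrictConvexOn ℝ s (f i)) :
    StrictConvexOn ℝ (univ.pi fun _ => s) fun Q => ∑ i, f i (Q i) := by
  refine ⟨convex_pi fun i _ => (hf i).1, fun Q hQ R hR hne a b ha hb hab => ?_⟩
  obtain ⟨i, hi⟩ := ne_iff.mp hne
  simp only [Pi.add_apply, Pi.smul_apply, smul_eq_mul, Finset.mul_sum, ← Finset.sum_add_distrib]
  exact Finset.sum_lt_sum
    (fun j _ => (hf j).convexOn.2 (hQ j trivial) (hR j trivial) ha.le hb.le hab)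
    ⟨i, Finset.mem_univ i, (hf i).2 (hQ i trivial) (hR i trivial) hi ha hb hab⟩

theorem strictConvexOn_mul_log_div {p : ℝ} (hp : 0 < p) :
    StrictConvexOn ℝ (Ioi 0) fun t => p * log (p / t) := by
  refine ⟨convex_Ioi 0, fun u hu v hv huv a b ha hb hab => ?_⟩
  have hlog := strictConcaveOn_log_Ioi.2 hu hv huv ha hb hab
  have hw : 0 < a * u + b * v := by have := mem_Ioi.mp hu; have := mem_Ioi.mp hv; positivity
  simp only [smul_eq_mul] at hlog ⊢
  rw [log_div hp.ne' hw.ne', log_div hp.ne' (ne_of_gt hu), log_div hp.ne' (ne_of_gt hv)]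
  linear_combination p * hlog - p * log p * hab

theorem sub_le_mul_log_div {p q : ℝ} (hp : 0 < p) (hq : 0 < q) : p - q ≤ p * log (p / q) := by
  have := one_sub_inv_le_log_of_pos (div_pos hp hq)
  rw [inv_div] at this
  calc p - q = p * (1 - q / p) := by field_simp
    _ ≤ p * log (p / q) := by gcongr

theorem convex_setOf_isProbDist : Convex ℝ {P : X → ℝ | IsProbDist P} := by
  rintro P ⟨hP0, hP1⟩ Q ⟨hQ0, hQ1⟩ a b ha hb hab
  refine ⟨fun x => ?_, ?_⟩
  · have := hP0 x; have := hQ0 x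
    simp only [Pi.add_apply, Pi.smul_apply, smul_eq_mul]
    positivity
  · simp only [Pi.add_apply, Pi.smul_apply, smul_eq_mul, Finset.sum_add_distrib,
      ← Finset.mul_sum, hP1, hQ1, hab, mul_one]

theorem KL_eq_sum_of_pos {P : X → ℝ} (hP : ∀ x, 0 < P x) (Q : X → ℝ) :
    KL P Q = ∑ x, P x * log (P x / Q x) :=
  Finset.sum_congr rfl fun x _ => if_pos (hP x)

theorem KL_self_of_pos {P : X → ℝ} (hP : ∀ x, 0 < P x) : KL P P = 0 := by
  simp [KL_eq_sum_of_pos hP, div_self (hP _).ne']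

theorem KL_nonneg {P Q : X → ℝ} (hP : IsProbDist P) (hQ : IsProbDist Q)
    (hPQ : ∀ x, 0 < P x → 0 < Q x) : 0 ≤ KL P Q := by
  have hterm : ∀ x, P x - Q x ≤ if 0 < P x then P x * log (P x / Q x) else 0 := fun x => by
    split_ifs with hx
    · exact sub_le_mul_log_div hx (hPQ x hx)
    · linarith [hQ.1 x, hP.1 x]
  calc (0 : ℝ) = ∑ x, (P x - Q x) := by rw [Finset.sum_sub_distrib, hP.2, hQ.2, sub_self]
    _ ≤ KL P Q := Finset.sum_le_sum fun x _ => hterm x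

theorem strictConvexOn_KL {P : X → ℝ} (hP : ∀ x, 0 < P x) :
    StrictConvexOn ℝ (univ.pi fun _ => Ioi 0) (KL P) :=
  (strictConvexOn_sum_apply fun x => strictConvexOn_mul_log_div (hP x)).congr fun Q _ =>
    (KL_eq_sum_of_pos hP Q).symm

theorem kl_mix_strictMonoOn_general
    (P1 P2 : X → ℝ) (hP1 : IsProbDist P1) (hP2 : IsProbDist P2)
    (hP2pos : ∀ x, 0 < P2 x) (hne : P1 ≠ P2) :
    StrictMonoOn (fun β : ℝ => KL P2 (fun x => β * P1 x + (1 - β) * P2 x))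
      (Set.Ico (0 : ℝ) 1) := by
  set ψ := KL P2 ∘ AffineMap.lineMap (k := ℝ) P2 P1
  have hψ : (fun β : ℝ => KL P2 (fun x => β * P1 x + (1 - β) * P2 x)) = ψ := by
    ext β
    simp only [ψ, comp_apply, AffineMap.lineMap_apply_module]
    congr 1; ext x
    simp only [Pi.add_apply, Pi.smul_apply, smul_eq_mul]; ring
  have hpos : Ico (0 : ℝ) 1 ⊆ AffineMap.lineMap P2 P1 ⁻¹' univ.pi fun _ => Ioi 0 :=
    fun β hβ x _ => by
      have := hP1.1 x; have := hP2pos x; have := hβ.1; have := sub_pos.2 hβ.2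
      simp only [AffineMap.lineMap_apply_module, Pi.add_apply, Pi.smul_apply, smul_eq_mul,
        mem_Ioi]
      positivity
  have hconv : StrictConvexOn ℝ (Ico 0 1) ψ :=
    ((strictConvexOn_KL hP2pos).comp_affineMap_of_injective _
      (AffineMap.lineMap_injective ℝ hne.symm)).subset hpos (convex_Ico 0 1)
  have hmin : IsMinOn ψ (Ico 0 1) 0 := fun β hβ => by
    show ψ 0 ≤ ψ β
    simp only [ψ, comp_apply, AffineMap.lineMap_apply_zero, KL_self_of_pos hP2pos]
    exact KL_nonneg hP2 (convex_setOf_isProbDist.lineMap_mem hP2 hP1 (Ico_subset_Icc_self hβ))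
      fun x _ => hpos hβ x trivial
  have hmono := hconv.strictMonoOn_of_isMinOn hmin ⟨le_rfl, one_pos⟩
  rwa [inter_eq_left.mpr Ico_subset_Ici_self, ← hψ] at hmono

/-- `ψ(β) = D(P2 ‖ β·P1 + (1−β)·P2)` is strictly increasing on `[0,1)`. -/
theorem kl_mix_strictMonoOn [Nonempty X]
    (P1 P2 : X → ℝ) (hP1 : IsProbDist P1) (hP2 : IsProbDist P2)
    (hP1pos : ∀ x, 0 < P1 x) (hP2pos : ∀ x, 0 < P2 x) (hne : P1 ≠ P2) :
    StrictMonoOn (fun β : ℝ => KL P2 (fun x => β * P1 x + (1 - β) * P2 x))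
      (Set.Ico (0 : ℝ) 1) :=
  kl_mix_strictMonoOn_general P1 P2 hP1 hP2 hP2pos hne

end StmtNS
end

section
/- Let 𝒳 be a nonempty finite set, let P1 ≠ P2 be full-support probability distributions on 𝒳 and let r' > 0. Then the function t ↦ GJS( t·P1 + (1−t)·P2, P2, r'/t ) is strictly increasing on the interval (0,1). -/
/-!
Let `H(u)` be the negative entropy `∑ m log m` of the mixture `m_u = u P1 + (1 - u) P2`.
The midpoint `(a m_t + P2)/(a + 1)` is again a mixture `m_l`, so the GJS divergence is the
Jensen gap `a H(t) + H(0) - (a + 1) H(l)`, and for `a = r'/t` one has `1/l = 1/t + 1/r'`.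
In terms of the perspective `T(s) = s H(1/s)` this reads `r' (T(1/t) - T(1/t + 1/r')) + H(0)`.
Since `x log x` is strictly convex and `P1 ≠ P2`, `H` is strictly convex on `[0, 1]`, hence so is
its perspective `T` on `[1, ∞)`; the increments of `T` over the fixed length `1/r'` therefore
strictly increase with `s = 1/t`, i.e. the divergence strictly increases with `t`.
-/

namespace StmtNS

variable {X : Type*} [Fintype X]

open Real Finset

theorem _root_.StrictConvexOn.perspective {s t : Set ℝ} {f : ℝ → ℝ}
    (hf : StrictConvexOn ℝ s f) (ht : Convex ℝ t) (hts : ∀ x ∈ t, 0 < x ∧ x⁻¹ ∈ s) :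
    StrictConvexOn ℝ t (fun x => x * f x⁻¹) := by
  refine ⟨ht, fun x hx y hy hxy a b ha hb hab => ?_⟩
  obtain ⟨hx0, hxs⟩ := hts x hx
  obtain ⟨hy0, hys⟩ := hts y hy
  set z := a * x + b * y
  have hz : 0 < z := by positivity
  have hcomb : (a * x / z) • x⁻¹ + (b * y / z) • y⁻¹ = z⁻¹ := by
    simp only [smul_eq_mul]
    field_simp
    linear_combination hab
  have key := hf.2 hxs hys (inv_injective.ne hxy) (by positivity : 0 < a * x / z)
    (by positivity : 0 < b * y / z) (by rw [← add_div, div_self hz.ne'])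
  rw [hcomb, smul_eq_mul, smul_eq_mul] at key
  calc z * f z⁻¹ < z * (a * x / z * f x⁻¹ + b * y / z * f y⁻¹) := mul_lt_mul_of_pos_left key hz
    _ = a * (x * f x⁻¹) + b * (y * f y⁻¹) := by field_simp

theorem _root_.StrictConvexOn.increment_lt_increment {s : Set ℝ} {g : ℝ → ℝ}
    (hg : StrictConvexOn ℝ s g) {x y c : ℝ} (hx : x ∈ s) (hyc : y + c ∈ s) (hxy : x < y)
    (hc : 0 < c) :
    g (x + c) - g x < g (y + c) - g y := by
  have h₁ := hg.secant_strict_mono_aux1 hx hyc (by linarith : x < x + c) (by linarith)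
  have h₂ := hg.secant_strict_mono_aux1 hx hyc hxy (by linarith : y < y + c)
  have hpos : 0 < y + c - x := by linarith
  refine lt_of_mul_lt_mul_left ?_ hpos.le
  linarith

def mix {α : Type*} (P1 P2 : α → ℝ) (u : ℝ) : α → ℝ := fun x => u * P1 x + (1 - u) * P2 x

lemma mix_nonneg {α : Type*} {P1 P2 : α → ℝ} (h1 : ∀ x, 0 ≤ P1 x) (h2 : ∀ x, 0 ≤ P2 x)
    {u : ℝ} (hu : u ∈ Set.Icc (0 : ℝ) 1) (x : α) : 0 ≤ mix P1 P2 u x := by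
  have := mul_nonneg hu.1 (h1 x)
  have := mul_nonneg (sub_nonneg.2 hu.2) (h2 x)
  unfold mix; linarith

lemma mix_pos {α : Type*} {P1 P2 : α → ℝ} (h1 : ∀ x, 0 < P1 x) (h2 : ∀ x, 0 < P2 x)
    {u : ℝ} (hu : u ∈ Set.Icc (0 : ℝ) 1) (x : α) : 0 < mix P1 P2 u x := by
  rcases hu.1.eq_or_lt with rfl | hu0
  · simpa [mix] using h2 x
  · have := mul_pos hu0 (h1 x)
    have := mul_nonneg (sub_nonneg.2 hu.2) (h2 x).le
    unfold mix; linarith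

lemma mix_avg_right {α : Type*} (P1 P2 : α → ℝ) {a : ℝ} (ha : a + 1 ≠ 0) (t : ℝ) :
    (fun x => (a * mix P1 P2 t x + P2 x) / (a + 1)) = mix P1 P2 (a * t / (a + 1)) := by
  ext x
  unfold mix
  field_simp
  ring

noncomputable def negEntropy (P : X → ℝ) : ℝ := ∑ x, P x * log (P x)

lemma KL_eq_negEntropy_sub {P Q : X → ℝ} (hP : ∀ x, 0 < P x) (hQ : ∀ x, Q x ≠ 0) :
    KL P Q = negEntropy P - ∑ x, P x * log (Q x) := by
  rw [KL, negEntropy, ← sum_sub_distrib]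
  refine sum_congr rfl fun x _ => ?_
  rw [if_pos (hP x), log_div (hP x).ne' (hQ x), mul_sub]

lemma GJS_eq_jensen_gap {Q Qt : X → ℝ} (hQ : ∀ x, 0 < Q x) (hQt : ∀ x, 0 < Qt x) {a : ℝ}
    (ha : 0 ≤ a) :
    GJS Q Qt a = a * negEntropy Q + negEntropy Qt
      - (a + 1) * negEntropy (fun x => (a * Q x + Qt x) / (a + 1)) := by
  set M := fun x => (a * Q x + Qt x) / (a + 1) with hM
  have hMpos : ∀ x, 0 < M x := fun x => by have := hQ x; have := hQt x; positivity
  have hcross : (a + 1) * negEntropy M =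
      a * ∑ x, Q x * log (M x) + ∑ x, Qt x * log (M x) := by
    rw [negEntropy, mul_sum, mul_sum, ← sum_add_distrib]
    refine sum_congr rfl fun x _ => ?_
    simp only [hM]
    field_simp
  rw [GJS, KL_eq_negEntropy_sub hQ fun x => (hMpos x).ne',
    KL_eq_negEntropy_sub hQt fun x => (hMpos x).ne', hcross]
  ring

lemma negEntropy_mix_strictConvexOn {P1 P2 : X → ℝ} (h1 : ∀ x, 0 ≤ P1 x) (h2 : ∀ x, 0 ≤ P2 x)
    (hne : P1 ≠ P2) :
    StrictConvexOn ℝ (Set.Icc 0 1) (fun u => negEntropy (mix P1 P2 u)) := by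
  refine ⟨convex_Icc 0 1, fun u hu v hv huv a b ha hb hab => ?_⟩
  obtain ⟨x₀, hx₀⟩ := Function.ne_iff.mp hne
  have hmix : ∀ x, mix P1 P2 (a * u + b * v) x = a * mix P1 P2 u x + b * mix P1 P2 v x :=
    fun x => by unfold mix; linear_combination (-P2 x) * hab
  have hsep : mix P1 P2 u x₀ ≠ mix P1 P2 v x₀ := by
    intro h
    exact (mul_ne_zero (sub_ne_zero.2 huv) (sub_ne_zero.2 hx₀)) (by unfold mix at h; linarith)
  simp only [negEntropy, smul_eq_mul, mul_sum, ← sum_add_distrib]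
  refine sum_lt_sum (fun x _ => ?_) ⟨x₀, mem_univ _, ?_⟩ <;> rw [hmix]
  · exact strictConvexOn_mul_log.convexOn.2 (mix_nonneg h1 h2 hu x) (mix_nonneg h1 h2 hv x)
      ha.le hb.le hab
  · exact strictConvexOn_mul_log.2 (mix_nonneg h1 h2 hu x₀) (mix_nonneg h1 h2 hv x₀) hsep
      ha hb hab

noncomputable def entropyPerspective (P1 P2 : X → ℝ) (s : ℝ) : ℝ :=
  s * negEntropy (mix P1 P2 s⁻¹)

lemma entropyPerspective_strictConvexOn {P1 P2 : X → ℝ} (h1 : ∀ x, 0 ≤ P1 x)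
    (h2 : ∀ x, 0 ≤ P2 x) (hne : P1 ≠ P2) :
    StrictConvexOn ℝ (Set.Ici 1) (entropyPerspective P1 P2) :=
  (negEntropy_mix_strictConvexOn h1 h2 hne).perspective (convex_Ici 1) fun _ hs =>
    ⟨zero_lt_one.trans_le hs, inv_nonneg.2 (zero_le_one.trans hs), inv_le_one_of_one_le₀ hs⟩

lemma GJS_mix_eq_entropyPerspective_sub {P1 P2 : X → ℝ} (h1 : ∀ x, 0 < P1 x)
    (h2 : ∀ x, 0 < P2 x) {r' t : ℝ} (hr' : 0 < r') (ht : t ∈ Set.Ioc 0 1) :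
    GJS (mix P1 P2 t) P2 (r' / t) =
      r' * (entropyPerspective P1 P2 t⁻¹ - entropyPerspective P1 P2 (t⁻¹ + r'⁻¹))
        + negEntropy P2 := by
  have ht0 := ht.1
  rw [GJS_eq_jensen_gap (mix_pos h1 h2 (Set.Ioc_subset_Icc_self ht)) h2 (by positivity),
    mix_avg_right P1 P2 (by positivity)]
  have hl : r' / t * t / (r' / t + 1) = (t⁻¹ + r'⁻¹)⁻¹ := by
    field_simp
  rw [hl, entropyPerspective, entropyPerspective, inv_inv]
  field_simp
  ring

theorem gjs_mix_ratio_strictMonoOn_general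
    (P1 P2 : X → ℝ)
    (hP1pos : ∀ x, 0 < P1 x) (hP2pos : ∀ x, 0 < P2 x) (hne : P1 ≠ P2)
    {r' : ℝ} (hr' : 0 < r') :
    StrictMonoOn (fun t : ℝ => GJS (fun x => t * P1 x + (1 - t) * P2 x) P2 (r' / t))
      (Set.Ioo (0 : ℝ) 1) := by
  have hT :=
    entropyPerspective_strictConvexOn (fun x => (hP1pos x).le) (fun x => (hP2pos x).le) hne
  intro t₁ ht₁ t₂ ht₂ hlt
  change GJS (mix P1 P2 t₁) P2 (r' / t₁) < GJS (mix P1 P2 t₂) P2 (r' / t₂)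
  rw [GJS_mix_eq_entropyPerspective_sub hP1pos hP2pos hr' (Set.Ioo_subset_Ioc_self ht₁),
    GJS_mix_eq_entropyPerspective_sub hP1pos hP2pos hr' (Set.Ioo_subset_Ioc_self ht₂)]
  have hone : ∀ t ∈ Set.Ioo (0 : ℝ) 1, 1 ≤ t⁻¹ := fun t ht => (one_le_inv₀ ht.1).2 ht.2.le
  have hinc := hT.increment_lt_increment (hone t₂ ht₂)
    (le_add_of_le_of_nonneg (hone t₁ ht₁) (inv_nonneg.2 hr'.le)) (inv_strictAnti₀ ht₁.1 hlt)
    (inv_pos.2 hr')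
  gcongr r' * ?_ + _
  linarith

/-- `t ↦ GJS(t·P1 + (1−t)·P2, P2, r'/t)` is strictly increasing on `(0,1)`. -/
theorem gjs_mix_ratio_strictMonoOn [Nonempty X]
    (P1 P2 : X → ℝ) (hP1 : IsProbDist P1) (hP2 : IsProbDist P2)
    (hP1pos : ∀ x, 0 < P1 x) (hP2pos : ∀ x, 0 < P2 x) (hne : P1 ≠ P2)
    {r' : ℝ} (hr' : 0 < r') :
    StrictMonoOn (fun t : ℝ => GJS (fun x => t * P1 x + (1 - t) * P2 x) P2 (r' / t))
      (Set.Ioo (0 : ℝ) 1) :=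
  gjs_mix_ratio_strictMonoOn_general P1 P2 hP1pos hP2pos hne hr'

end StmtNS
end
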